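/- arXiv:2401.09651 — 2 statements merged into one kernel-verified Lean document; each statement's English description precedes it below -/
import Mathlib

section
/- Suppose the feasible set Ω is nonempty and compact. Then for every w ∈ ℝ^r with w ≥ 0 the regularized LCQP has a unique minimizer ν*(w) over Ω, the optimal value function V : ℝ^r → ℝ is (Fréchet) differentiable at w, and its gradient is given by the partial derivatives of the objective at the minimizer: for each k ∈ {1,…,r}, (∇V(w))_k = ν*(w)ᵀ D(e_k) ν*(w) + c(e_k)ᵀ ν*(w), where e_k is the k-th standard basis vector of ℝ^r. -/
/-!
The objective is affine in the weights: `f ν (w + u) = f ν w + L ν u` with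
`L ν u = νᵀ D(u) ν + c(u)ᵀ ν`. Hence, with `ν*` a minimizer selection,
`V (w + u) - V w - L (ν* w) u` lies between `(L (ν* (w + u)) - L (ν* w)) u` and `0`, which is
`o(‖u‖)` as soon as `ν*` is continuous at `w` (Danskin). For `w ≥ 0` the matrix `D w + ε I` is
positive definite, so the objective is strictly convex on the convex polytope `Ω` and its minimizer
is unique; a unique minimizer over a compact set depends continuously on the parameter (Berge).
-/

open Matrix Filter Topology Function

theorem Matrix.PosDef.strictConvexOn_dotProduct_mulVec_add {n : Type*} [Fintype n] {Q : Matrix n n ℝ} (hQ : Q.PosDef)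
    (c : n → ℝ) : StrictConvexOn ℝ Set.univ fun x => x ⬝ᵥ Q *ᵥ x + c ⬝ᵥ x := by
  refine ⟨convex_univ, fun x _ y _ hxy a b ha hb hab => ?_⟩
  have hgap : 0 < (x - y) ⬝ᵥ Q *ᵥ (x - y) := by
    simpa using hQ.dotProduct_mulVec_pos (sub_ne_zero.mpr hxy)
  obtain rfl : b = 1 - a := by linarith
  have hmix : (a • x + (1 - a) • y) ⬝ᵥ Q *ᵥ (a • x + (1 - a) • y) + c ⬝ᵥ (a • x + (1 - a) • y) =
      a * (x ⬝ᵥ Q *ᵥ x + c ⬝ᵥ x) + (1 - a) * (y ⬝ᵥ Q *ᵥ y + c ⬝ᵥ y) -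
        a * (1 - a) * ((x - y) ⬝ᵥ Q *ᵥ (x - y)) := by
    simp only [mulVec_add, mulVec_sub, mulVec_smul, dotProduct_add, dotProduct_sub,
      add_dotProduct, sub_dotProduct, dotProduct_smul, smul_dotProduct, smul_eq_mul]
    ring
  simp only [smul_eq_mul, hmix]
  nlinarith [mul_pos ha hb]

theorem convex_setOf_mulVec_add_nonpos {m n : Type*} [Fintype n] (A : Matrix m n ℝ) (b : m → ℝ) :
    Convex ℝ {ν | ∀ i, A.mulVec ν i + b i ≤ 0} := by
  intro x hx y hy s t hs ht hst i
  have hcomb : A.mulVec (s • x + t • y) i + b i =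
      s * (A.mulVec x i + b i) + t * (A.mulVec y i + b i) := by
    simp only [mulVec_add, mulVec_smul, Pi.add_apply, Pi.smul_apply, smul_eq_mul]
    linear_combination (-b i) * hst
  rw [hcomb]
  nlinarith [mul_nonpos_of_nonneg_of_nonpos hs (hx i), mul_nonpos_of_nonneg_of_nonpos ht (hy i)]

section ArgminContinuity

variable {X W : Type*} [TopologicalSpace X] [TopologicalSpace W] {f : X → W → ℝ} {K : Set X}
  {s : W → X} {w₀ : W}

theorem isMinOn_of_mapClusterPt (hf : Continuous (uncurry f))
    (hs : ∀ w, IsMinOn (f · w) K (s w)) {x : X} (hx : MapClusterPt x (𝓝 w₀) s) :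
    IsMinOn (f · w₀) K x := by
  refine isMinOn_iff.mpr fun ν hν => ?_
  by_contra! hlt
  have hnear : ∀ᶠ p in 𝓝 (x, w₀), f ν p.2 < f p.1 p.2 :=
    (hf.comp (continuous_const.prodMk continuous_snd)).continuousAt.eventually_lt
      hf.continuousAt hlt
  obtain ⟨U, hU, V, hV, hUV⟩ := mem_nhds_prod_iff.mp hnear
  obtain ⟨w, hsw, hw⟩ := ((mapClusterPt_iff_frequently.mp hx U hU).and_eventually hV).exists
  exact (hUV (Set.mk_mem_prod hsw hw)).not_ge (isMinOn_iff.mp (hs w) ν hν)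

theorem continuousAt_of_isMinOn_of_unique (hf : Continuous (uncurry f)) (hK : IsCompact K)
    (hsK : ∀ w, s w ∈ K) (hs : ∀ w, IsMinOn (f · w) K (s w))
    (huniq : ∀ x ∈ K, IsMinOn (f · w₀) K x → x = s w₀) : ContinuousAt s w₀ :=
  hK.tendsto_nhds_of_unique_mapClusterPt (Eventually.of_forall hsK) fun x hxK hx =>
    huniq x hxK (isMinOn_of_mapClusterPt hf hs hx)

end ArgminContinuity

theorem hasFDerivAt_of_isMinOn_of_affine {X E : Type*} [NormedAddCommGroup E] [NormedSpace ℝ E]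
    {K : Set X} {g : X → E → ℝ} {L : X → E →L[ℝ] ℝ} {s : E → X} {w : E}
    (hg : ∀ ν u, g ν (w + u) = g ν w + L ν u) (hsK : ∀ w', s w' ∈ K)
    (hs : ∀ w', IsMinOn (g · w') K (s w')) (hL : ContinuousAt (fun w' => L (s w')) w) :
    HasFDerivAt (fun w' => g (s w') w') (L (s w)) w := by
  have hbound : ∀ u, ‖g (s (w + u)) (w + u) - g (s w) w - L (s w) u‖ ≤
      ‖L (s (w + u)) - L (s w)‖ * ‖u‖ := by
    intro u
    have hupper := isMinOn_iff.mp (hs (w + u)) _ (hsK w)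
    have hlower := isMinOn_iff.mp (hs w) _ (hsK (w + u))
    have hdiff := ((L (s (w + u)) - L (s w)).le_opNorm u)
    simp only [_root_.sub_apply, Real.norm_eq_abs, abs_le] at hdiff ⊢
    simp only [hg] at hupper ⊢
    constructor <;> linarith
  have hsmall : Tendsto (fun u => ‖L (s (w + u)) - L (s w)‖) (𝓝 0) (𝓝 0) :=
    tendsto_iff_norm_sub_tendsto_zero.mp
      (hL.tendsto.comp ((continuous_const_add w).tendsto' 0 w (add_zero w)))
  rw [hasFDerivAt_iff_isLittleO_nhds_zero, Asymptotics.isLittleO_iff]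
  intro ε hε
  filter_upwards [hsmall.eventually (ge_mem_nhds hε)] with u hu
  exact (hbound u).trans (mul_le_mul_of_nonneg_right hu (norm_nonneg u))

section WeightDerivative

variable {n E : Type*} [Fintype n] [NormedAddCommGroup E] [NormedSpace ℝ E] [FiniteDimensional ℝ E]

noncomputable def lcqpWeightDeriv (D : E →ₗ[ℝ] Matrix n n ℝ) (c : E →ₗ[ℝ] (n → ℝ)) (ν : n → ℝ) :
    E →L[ℝ] ℝ :=
  LinearMap.toContinuousLinearMap
    { toFun := fun u => ν ⬝ᵥ D u *ᵥ ν + c u ⬝ᵥ ν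
      map_add' := fun u v => by
        simp only [map_add, add_mulVec, dotProduct_add, add_dotProduct]
        ring
      map_smul' := fun a u => by
        simp only [map_smul, smul_mulVec, dotProduct_smul, smul_dotProduct, smul_eq_mul,
          RingHom.id_apply]
        ring }

@[simp]
theorem lcqpWeightDeriv_apply (D : E →ₗ[ℝ] Matrix n n ℝ) (c : E →ₗ[ℝ] (n → ℝ)) (ν : n → ℝ)
    (u : E) : lcqpWeightDeriv D c ν u = ν ⬝ᵥ D u *ᵥ ν + c u ⬝ᵥ ν :=
  rfl

theorem continuous_lcqpWeightDeriv (D : E →ₗ[ℝ] Matrix n n ℝ) (c : E →ₗ[ℝ] (n → ℝ)) :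
    Continuous (lcqpWeightDeriv D c) :=
  continuous_clm_apply.mpr fun u => by
    simp only [lcqpWeightDeriv_apply]
    fun_prop

end WeightDerivative

theorem lcqp_value_differentiable_in_weights_general
    (N M r : ℕ)
    (ε : ℝ) (hε : 0 < ε)
    (A : Matrix (Fin M) (Fin N) ℝ) (b : Fin M → ℝ)
    (Ω : Set (Fin N → ℝ))
    (hΩ : Ω = {ν | ∀ i, A.mulVec ν i + b i ≤ 0})
    (D : (Fin r → ℝ) →ₗ[ℝ] Matrix (Fin N) (Fin N) ℝ)
    (hDpsd : ∀ w : Fin r → ℝ, 0 ≤ w → (D w).PosSemidef)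
    (c : (Fin r → ℝ) →ₗ[ℝ] (Fin N → ℝ))
    (f : (Fin N → ℝ) → (Fin r → ℝ) → ℝ)
    (hf : ∀ ν w, f ν w =
      ν ⬝ᵥ ((D w + ε • (1 : Matrix (Fin N) (Fin N) ℝ)).mulVec ν) + c w ⬝ᵥ ν)
    (V : (Fin r → ℝ) → ℝ)
    (hV : ∀ w, V w = sInf ((fun ν => f ν w) '' Ω))
    (hΩne : Ω.Nonempty) (hΩcompact : IsCompact Ω) :
    ∃ νstar : (Fin r → ℝ) → (Fin N → ℝ),
      ∀ w : Fin r → ℝ, 0 ≤ w →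
        (νstar w ∈ Ω ∧ (∀ ν ∈ Ω, f (νstar w) w ≤ f ν w) ∧
          (∀ ν ∈ Ω, (∀ ν' ∈ Ω, f ν w ≤ f ν' w) → ν = νstar w)) ∧
        ∃ L : (Fin r → ℝ) →L[ℝ] ℝ, HasFDerivAt V L w ∧
          ∀ k : Fin r, L (Pi.single k 1) =
            νstar w ⬝ᵥ (D (Pi.single k 1)).mulVec (νstar w) +
              c (Pi.single k 1) ⬝ᵥ νstar w := by
  have hcont : Continuous (uncurry f) := by
    have hD := D.continuous_of_finiteDimensional
    have hc := c.continuous_of_finiteDimensional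
    simp only [uncurry_def, hf]
    fun_prop
  have hshift : ∀ ν w u, f ν (w + u) = f ν w + lcqpWeightDeriv D c ν u := by
    intro ν w u
    simp only [hf, lcqpWeightDeriv_apply, map_add, add_mulVec, dotProduct_add, add_dotProduct]
    ring
  have hcont_w : ∀ w, Continuous (f · w) := fun w =>
    hcont.comp (continuous_id.prodMk continuous_const)
  choose νstar hνΩ hνmin using fun w => hΩcompact.exists_isMinOn hΩne (hcont_w w).continuousOn
  have huniq : ∀ w, 0 ≤ w → ∀ ν ∈ Ω, IsMinOn (f · w) Ω ν → ν = νstar w := by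
    intro w hw ν hν hmin
    have hQ : (D w + ε • (1 : Matrix (Fin N) (Fin N) ℝ)).PosDef :=
      PosDef.posSemidef_add (hDpsd w hw) (PosDef.one.smul hε)
    have hstrict : StrictConvexOn ℝ Ω (f · w) := by
      simp only [hf]
      exact (hQ.strictConvexOn_dotProduct_mulVec_add (c w)).subset (Set.subset_univ Ω)
        (hΩ ▸ convex_setOf_mulVec_add_nonpos A b)
    exact hstrict.eq_of_isMinOn hmin (hνmin w) hν (hνΩ w)
  have hVmin : V = fun w => f (νstar w) w := funext fun w => by
    rw [hV, sInf_image', (hνmin w).iInf_eq (hνΩ w)]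
  refine ⟨νstar, fun w hw => ⟨⟨hνΩ w, isMinOn_iff.mp (hνmin w), fun ν hν hmin =>
    huniq w hw ν hν (isMinOn_iff.mpr hmin)⟩, lcqpWeightDeriv D c (νstar w), ?_, fun k => rfl⟩⟩
  rw [hVmin]
  exact hasFDerivAt_of_isMinOn_of_affine (hshift · w) hνΩ hνmin
    ((continuous_lcqpWeightDeriv D c).continuousAt.comp
      (continuousAt_of_isMinOn_of_unique hcont hΩcompact hνΩ hνmin (huniq w hw)))

/-- For nonnegative weights the regularized LCQP over a nonempty
compact feasible set has a unique minimizer, the optimal value function is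
Fréchet differentiable, and its partial derivatives are given by evaluating the
(weight-linear parts of the) objective at the minimizer. -/
theorem lcqp_value_differentiable_in_weights
    (N M r : ℕ) (hN : 0 < N) (hM : 0 < M) (hr : 0 < r)
    (ε : ℝ) (hε : 0 < ε)
    (A : Matrix (Fin M) (Fin N) ℝ) (b : Fin M → ℝ)
    (Ω : Set (Fin N → ℝ))
    (hΩ : Ω = {ν | ∀ i, A.mulVec ν i + b i ≤ 0})
    (D : (Fin r → ℝ) →ₗ[ℝ] Matrix (Fin N) (Fin N) ℝ)
    (hDdiag : ∀ w, (D w).IsDiag)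
    (hDpsd : ∀ w : Fin r → ℝ, 0 ≤ w → (D w).PosSemidef)
    (hDbound : ∀ (w : Fin r → ℝ) (ν : Fin N → ℝ),
      Real.sqrt (∑ i, (D w).mulVec ν i ^ 2) ≤
        Real.sqrt (∑ k, w k ^ 2) * Real.sqrt (∑ i, ν i ^ 2))
    (c : (Fin r → ℝ) →ₗ[ℝ] (Fin N → ℝ))
    (hcbound : ∀ w : Fin r → ℝ,
      Real.sqrt (∑ i, c w i ^ 2) ≤ Real.sqrt (∑ k, w k ^ 2))
    (f : (Fin N → ℝ) → (Fin r → ℝ) → ℝ)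
    (hf : ∀ ν w, f ν w =
      ν ⬝ᵥ ((D w + ε • (1 : Matrix (Fin N) (Fin N) ℝ)).mulVec ν) + c w ⬝ᵥ ν)
    (V : (Fin r → ℝ) → ℝ)
    (hV : ∀ w, V w = sInf ((fun ν => f ν w) '' Ω))
    (hΩne : Ω.Nonempty) (hΩcompact : IsCompact Ω) :
    ∃ νstar : (Fin r → ℝ) → (Fin N → ℝ),
      ∀ w : Fin r → ℝ, 0 ≤ w →
        (νstar w ∈ Ω ∧ (∀ ν ∈ Ω, f (νstar w) w ≤ f ν w) ∧
          (∀ ν ∈ Ω, (∀ ν' ∈ Ω, f ν w ≤ f ν' w) → ν = νstar w)) ∧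
        ∃ L : (Fin r → ℝ) →L[ℝ] ℝ, HasFDerivAt V L w ∧
          ∀ k : Fin r, L (Pi.single k 1) =
            νstar w ⬝ᵥ (D (Pi.single k 1)).mulVec (νstar w) +
              c (Pi.single k 1) ⬝ᵥ νstar w :=
  lcqp_value_differentiable_in_weights_general N M r ε hε A b Ω hΩ D hDpsd c f hf V hV hΩne
    hΩcompact
end

section
/- Let p be a positive integer, w̄ ∈ ℝ^p, and B : ℝ^p → ℝ^M a function differentiable at w̄ with Jacobian J := ∇B(w̄) ∈ ℝ^{M×p}. Suppose there exists ν̄ ∈ ℝ^N with Aν̄ + B(w̄) < 0 componentwise (strict feasibility). Then for every optimal dual solution μ* ∈ argmin_{μ ∈ ℝ^M, μ ≥ 0} h(μ; B(w̄)), the vector Jᵀμ* is a regular (Fréchet) subgradient of the composite function w ↦ V(B(w)) at w̄; that is, liminf over w → w̄, w ≠ w̄, of [V(B(w)) − V(B(w̄)) − ⟨Jᵀμ*, w − w̄⟩] / ‖w − w̄‖ is ≥ 0. -/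
/-!
Minimality of `μ*` for the dual objective over `μ ≥ 0` yields the KKT conditions, which make
`μ*` a Lagrange multiplier of the primal program at `b = B w̄`, with primal point
`ν* = -½ Q⁻¹ (c + Aᵀμ*)`. Weak duality then gives the global affine minorant
`V b' ≥ V b + μ*ᵀ (b' - b)` for every feasible `b'`, and strict feasibility keeps `B w` feasible
for `w` near `w̄`. Hence `w ↦ V (B w) - V (B w̄)` dominates `w ↦ μ*ᵀ (B w - B w̄)` near `w̄`; the
latter is differentiable at `w̄` with gradient `Jᵀμ*`, which is therefore a Fréchet subgradient.
-/

open Matrix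

/-- Euclidean (ℓ₂) norm of a finite real vector. -/
noncomputable def l2norm {k : ℕ} (v : Fin k → ℝ) : ℝ := Real.sqrt (∑ i, v i ^ 2)

open Filter Topology

section QuadraticForm

variable {n : Type*} [Fintype n]

lemma dotProduct_mulVec_add_smul {S : Matrix n n ℝ} (hS : S.IsSymm) (x d : n → ℝ) (t : ℝ) :
    (x + t • d) ⬝ᵥ S *ᵥ (x + t • d) =
      x ⬝ᵥ S *ᵥ x + 2 * t * ((S *ᵥ x) ⬝ᵥ d) + t ^ 2 * (d ⬝ᵥ S *ᵥ d) := by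
  have hx : x ⬝ᵥ S *ᵥ d = (S *ᵥ x) ⬝ᵥ d := by
    rw [dotProduct_mulVec, ← mulVec_transpose, hS.eq]
  simp only [mulVec_add, mulVec_smul, dotProduct_add, add_dotProduct, dotProduct_smul,
    smul_dotProduct, smul_eq_mul, hx, dotProduct_comm d (S *ᵥ x)]
  ring

lemma Matrix.PosSemidef.dotProduct_mulVec_add_dotProduct_le {Q : Matrix n n ℝ}
    (hQ : Q.PosSemidef) {r ν₀ : n → ℝ} (hν₀ : (2 : ℝ) • Q *ᵥ ν₀ + r = 0) (ν : n → ℝ) :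
    ν₀ ⬝ᵥ Q *ᵥ ν₀ + r ⬝ᵥ ν₀ ≤ ν ⬝ᵥ Q *ᵥ ν + r ⬝ᵥ ν := by
  have hr : r = -((2 : ℝ) • Q *ᵥ ν₀) := eq_neg_of_add_eq_zero_right hν₀
  have hexpand := dotProduct_mulVec_add_smul (isHermitian_iff_isSymm.1 hQ.isHermitian)
    ν₀ (ν - ν₀) 1
  rw [one_smul, add_sub_cancel] at hexpand
  have hpsd : 0 ≤ (ν - ν₀) ⬝ᵥ Q *ᵥ (ν - ν₀) := by
    simpa using hQ.dotProduct_mulVec_nonneg (ν - ν₀)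
  have hrν : r ⬝ᵥ ν = r ⬝ᵥ ν₀ - 2 * ((Q *ᵥ ν₀) ⬝ᵥ (ν - ν₀)) := by
    rw [hr, neg_dotProduct, neg_dotProduct, smul_dotProduct, smul_dotProduct, dotProduct_sub]
    simp only [smul_eq_mul]
    ring
  rw [hexpand, hrν]
  nlinarith

end QuadraticForm

lemma nonneg_of_forall_mul_add_sq_mul_nonneg {a q : ℝ}
    (h : ∀ t ∈ Set.Ioc (0 : ℝ) 1, 0 ≤ t * a + t ^ 2 * q) : 0 ≤ a := by
  have hlim : Tendsto (fun t => a + t * q) (𝓝[>] 0) (𝓝 a) := by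
    have : Tendsto (fun t => a + t * q) (𝓝 0) (𝓝 (a + 0 * q)) :=
      tendsto_const_nhds.add (tendsto_id.mul_const q)
    simpa using this.mono_left nhdsWithin_le_nhds
  refine ge_of_tendsto hlim ?_
  filter_upwards [Ioc_mem_nhdsGT zero_lt_one] with t ht
  refine nonneg_of_mul_nonneg_right ?_ ht.1
  nlinarith [h t ht]

section DualObjective

variable {m : Type*} [Fintype m]

noncomputable def dualObjective (S : Matrix m m ℝ) (v μ : m → ℝ) : ℝ :=
  (1 / 4) * (μ ⬝ᵥ S *ᵥ μ) + (1 / 2) * (v ⬝ᵥ μ)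

variable {S : Matrix m m ℝ} {v μ₀ : m → ℝ}

theorem dotProduct_sub_nonneg_of_forall_nonneg_le (hS : S.IsSymm) (hμ₀ : 0 ≤ μ₀)
    (hmin : ∀ μ, 0 ≤ μ → dualObjective S v μ₀ ≤ dualObjective S v μ)
    {y : m → ℝ} (hy : 0 ≤ y) : 0 ≤ (S *ᵥ μ₀ + v) ⬝ᵥ (y - μ₀) := by
  refine nonneg_of_forall_mul_add_sq_mul_nonneg (q := (y - μ₀) ⬝ᵥ S *ᵥ (y - μ₀) / 2) ?_
  intro t ⟨ht₀, ht₁⟩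
  have hseg : 0 ≤ μ₀ + t • (y - μ₀) := by
    intro i
    have := add_nonneg (mul_nonneg (sub_nonneg.2 ht₁) (hμ₀ i)) (mul_nonneg ht₀.le (hy i))
    simp only [Pi.add_apply, Pi.smul_apply, Pi.sub_apply, smul_eq_mul, Pi.zero_apply]
    linarith
  have h := hmin _ hseg
  rw [dualObjective, dualObjective, dotProduct_mulVec_add_smul hS, dotProduct_add,
    dotProduct_smul, smul_eq_mul] at h
  rw [add_dotProduct]
  linarith

theorem kkt_of_forall_nonneg_le [DecidableEq m] (hS : S.IsSymm) (hμ₀ : 0 ≤ μ₀)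
    (hmin : ∀ μ, 0 ≤ μ → dualObjective S v μ₀ ≤ dualObjective S v μ) :
    0 ≤ S *ᵥ μ₀ + v ∧ μ₀ ⬝ᵥ (S *ᵥ μ₀ + v) = 0 := by
  have hvi := fun y (hy : 0 ≤ y) => dotProduct_sub_nonneg_of_forall_nonneg_le hS hμ₀ hmin hy
  refine ⟨fun i => ?_, le_antisymm ?_ ?_⟩
  · simpa using hvi (μ₀ + Pi.single i 1) (add_nonneg hμ₀ (Pi.single_nonneg.2 zero_le_one))
  · have h0 := hvi 0 le_rfl
    rw [zero_sub, dotProduct_neg, dotProduct_comm] at h0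
    linarith
  · simpa [two_smul, dotProduct_comm] using hvi _ (add_nonneg hμ₀ hμ₀)

end DualObjective

section ParametricProgram

variable {m n : Type*} [Fintype m] [Fintype n] (A : Matrix m n ℝ)

def feasibleSet (b : m → ℝ) : Set (n → ℝ) := {ν | ∀ i, (A *ᵥ ν) i + b i ≤ 0}

def IsLagrangeMultiplier (f : (n → ℝ) → ℝ) (b μ : m → ℝ) : Prop :=
  0 ≤ μ ∧ ∃ ν₀ ∈ feasibleSet A b, μ ⬝ᵥ (A *ᵥ ν₀ + b) = 0 ∧
    ∀ ν, f ν₀ + μ ⬝ᵥ A *ᵥ ν₀ ≤ f ν + μ ⬝ᵥ A *ᵥ ν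

variable {A}

lemma eventually_mem_feasibleSet {X : Type*} [TopologicalSpace X] {B : X → m → ℝ} {x : X}
    (hB : ContinuousAt B x) {ν : n → ℝ} (hν : ∀ i, (A *ᵥ ν) i + B x i < 0) :
    ∀ᶠ y in 𝓝 x, ν ∈ feasibleSet A (B y) := by
  refine eventually_all.2 fun i => ?_
  have hi : Tendsto (fun y => (A *ᵥ ν) i + B y i) (𝓝 x) (𝓝 ((A *ᵥ ν) i + B x i)) :=
    tendsto_const_nhds.add ((continuous_apply i).continuousAt.tendsto.comp hB)
  exact (hi.eventually_lt_const (hν i)).mono fun _ => le_of_lt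

theorem IsLagrangeMultiplier.value_add_dotProduct_sub_le {f : (n → ℝ) → ℝ} {V : (m → ℝ) → ℝ}
    (hV : ∀ b, (feasibleSet A b).Nonempty → IsLeast (f '' feasibleSet A b) (V b))
    {b μ : m → ℝ} (hμ : IsLagrangeMultiplier A f b μ)
    {b' : m → ℝ} (hb' : (feasibleSet A b').Nonempty) :
    V b + μ ⬝ᵥ (b' - b) ≤ V b' := by
  obtain ⟨hμ, ν₀, hν₀, hslack, hLag⟩ := hμ
  obtain ⟨ν, hν, hVb'⟩ := (hV b' hb').1
  have hVb : V b ≤ f ν₀ := (hV b ⟨ν₀, hν₀⟩).2 ⟨ν₀, hν₀, rfl⟩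
  have hweak : 0 ≤ μ ⬝ᵥ -(A *ᵥ ν + b') :=
    dotProduct_nonneg_of_nonneg hμ fun i => neg_nonneg.2 (hν i)
  rw [dotProduct_neg, dotProduct_add] at hweak
  rw [dotProduct_add] at hslack
  rw [dotProduct_sub, ← hVb']
  linarith [hLag ν]

theorem isLagrangeMultiplier_of_dualObjective_min [DecidableEq m] [DecidableEq n]
    {Q : Matrix n n ℝ} (hQ : Q.PosDef) (c : n → ℝ) {b μ : m → ℝ} (hμ : 0 ≤ μ)
    (hmin : ∀ μ', 0 ≤ μ' → dualObjective (A * Q⁻¹ * Aᵀ) ((A * Q⁻¹) *ᵥ c - (2 : ℝ) • b) μ ≤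
      dualObjective (A * Q⁻¹ * Aᵀ) ((A * Q⁻¹) *ᵥ c - (2 : ℝ) • b) μ') :
    IsLagrangeMultiplier A (fun ν => ν ⬝ᵥ Q *ᵥ ν + c ⬝ᵥ ν) b μ := by
  have hS : (A * Q⁻¹ * Aᵀ).IsSymm := by
    have := (hQ.posSemidef.inv.mul_mul_conjTranspose_same A).isHermitian
    rwa [conjTranspose_eq_transpose_of_trivial, isHermitian_iff_isSymm] at this
  obtain ⟨hgrad, hslack⟩ := kkt_of_forall_nonneg_le hS hμ hmin
  set ν₀ := -(1 / 2 : ℝ) • Q⁻¹ *ᵥ (c + Aᵀ *ᵥ μ)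
  have hAν₀ : A *ᵥ ν₀ + b =
      -(1 / 2 : ℝ) • ((A * Q⁻¹ * Aᵀ) *ᵥ μ + ((A * Q⁻¹) *ᵥ c - (2 : ℝ) • b)) := by
    simp only [ν₀, mulVec_smul, mulVec_add, mulVec_mulVec, Matrix.mul_assoc]
    module
  have hQν₀ : (2 : ℝ) • Q *ᵥ ν₀ + (c + Aᵀ *ᵥ μ) = 0 := by
    rw [mulVec_smul, mulVec_mulVec, mul_nonsing_inv _ ((isUnit_iff_isUnit_det Q).1 hQ.isUnit),
      one_mulVec, smul_smul]
    module
  refine ⟨hμ, ν₀, fun i => ?_, ?_, fun ν => ?_⟩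
  · show (A *ᵥ ν₀ + b) i ≤ 0
    rw [hAν₀]
    exact smul_nonpos_of_nonpos_of_nonneg (by norm_num) hgrad i
  · rw [hAν₀, dotProduct_smul, hslack, smul_zero]
  · have := hQ.posSemidef.dotProduct_mulVec_add_dotProduct_le hQν₀ ν
    simp only [dotProduct_mulVec μ A, ← mulVec_transpose, add_dotProduct] at this ⊢
    linarith

end ParametricProgram

theorem HasFDerivAt.eventually_neg_mul_norm_le_of_eventually_le {E : Type*}
    [NormedAddCommGroup E] [NormedSpace ℝ E] {F φ : E → ℝ} {φ' : E →L[ℝ] ℝ} {x : E}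
    (hφ : HasFDerivAt φ φ' x) (hle : ∀ᶠ y in 𝓝 x, φ y - φ x ≤ F y - F x) {ε : ℝ} (hε : 0 < ε) :
    ∀ᶠ y in 𝓝 x, -(ε * ‖y - x‖) ≤ F y - F x - φ' (y - x) := by
  filter_upwards [hφ.isLittleO.def hε, hle] with y hy hyle
  rw [Real.norm_eq_abs] at hy
  linarith [neg_abs_le (φ y - φ x - φ' (y - x))]

lemma norm_le_l2norm {k : ℕ} (v : Fin k → ℝ) : ‖v‖ ≤ l2norm v :=
  (pi_norm_le_iff_of_nonneg (Real.sqrt_nonneg _)).2 fun i => by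
    rw [Real.norm_eq_abs, ← Real.sqrt_sq_eq_abs]
    exact Real.sqrt_le_sqrt (Finset.single_le_sum (fun j _ => sq_nonneg (v j)) (Finset.mem_univ i))

lemma exists_pos_forall_l2norm_sub_lt {k : ℕ} {P : (Fin k → ℝ) → Prop} {x : Fin k → ℝ}
    (h : ∀ᶠ y in 𝓝 x, P y) : ∃ δ > 0, ∀ y, l2norm (y - x) < δ → P y := by
  obtain ⟨δ, hδ, hball⟩ := Metric.eventually_nhds_iff.1 h
  exact ⟨δ, hδ, fun y hy => hball ((dist_eq_norm y x).trans_lt ((norm_le_l2norm _).trans_lt hy))⟩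

theorem lcqp_value_regular_subgradient_neural_weights_general
    (N M p : ℕ)
    (Q : Matrix (Fin N) (Fin N) ℝ) (hQpd : Q.PosDef)
    (c : Fin N → ℝ) (A : Matrix (Fin M) (Fin N) ℝ)
    (Ω : (Fin M → ℝ) → Set (Fin N → ℝ))
    (hΩ : ∀ b, Ω b = {ν | ∀ i, A.mulVec ν i + b i ≤ 0})
    (V : (Fin M → ℝ) → ℝ)
    (hV : ∀ b, (Ω b).Nonempty →
      IsLeast ((fun ν => ν ⬝ᵥ Q.mulVec ν + c ⬝ᵥ ν) '' Ω b) (V b))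
    (h : (Fin M → ℝ) → (Fin M → ℝ) → ℝ)
    (hh : ∀ μ b, h μ b = (1 / 4) * (μ ⬝ᵥ (A * Q⁻¹ * Aᵀ).mulVec μ) +
      (1 / 2) * (((A * Q⁻¹).mulVec c - (2 : ℝ) • b) ⬝ᵥ μ))
    (wbar : Fin p → ℝ) (B : (Fin p → ℝ) → (Fin M → ℝ))
    (J : Matrix (Fin M) (Fin p) ℝ)
    (hB : HasFDerivAt B (LinearMap.toContinuousLinearMap J.mulVecLin) wbar)
    (νbar : Fin N → ℝ)
    (hstrict : ∀ i, A.mulVec νbar i + B wbar i < 0)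
    (μstar : Fin M → ℝ) (hμnonneg : 0 ≤ μstar)
    (hμmin : ∀ μ : Fin M → ℝ, 0 ≤ μ → h μstar (B wbar) ≤ h μ (B wbar)) :
    ∀ ε : ℝ, 0 < ε → ∃ δ : ℝ, 0 < δ ∧
      ∀ w : Fin p → ℝ, w ≠ wbar → l2norm (w - wbar) < δ →
        (Ω (B w)).Nonempty ∧
        -(ε * l2norm (w - wbar)) ≤
          V (B w) - V (B wbar) - Jᵀ.mulVec μstar ⬝ᵥ (w - wbar) := by
  intro ε hε
  obtain rfl : Ω = feasibleSet A := funext hΩ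
  have hμ : IsLagrangeMultiplier A (fun ν => ν ⬝ᵥ Q *ᵥ ν + c ⬝ᵥ ν) (B wbar) μstar :=
    isLagrangeMultiplier_of_dualObjective_min hQpd c hμnonneg fun μ hμ => by
      simpa only [hh, dualObjective] using hμmin μ hμ
  have hfeas : ∀ᶠ w in 𝓝 wbar, (feasibleSet A (B w)).Nonempty :=
    (eventually_mem_feasibleSet hB.continuousAt hstrict).mono fun _ hw => ⟨νbar, hw⟩
  have hsens : ∀ᶠ w in 𝓝 wbar, μstar ⬝ᵥ B w - μstar ⬝ᵥ B wbar ≤ V (B w) - V (B wbar) :=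
    hfeas.mono fun w hw => by
      linarith [dotProduct_sub μstar (B w) (B wbar), hμ.value_add_dotProduct_sub_le hV hw]
  have hφ : HasFDerivAt (fun w => μstar ⬝ᵥ B w) _ wbar :=
    (dotProductBilin ℝ ℝ μstar).toContinuousLinearMap.hasFDerivAt.comp wbar hB
  obtain ⟨δ, hδ, hδP⟩ := exists_pos_forall_l2norm_sub_lt
    (hfeas.and (hφ.eventually_neg_mul_norm_le_of_eventually_le hsens hε))
  refine ⟨δ, hδ, fun w _ hw => ⟨(hδP w hw).1, ?_⟩⟩
  have hsub := (hδP w hw).2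
  have hnorm := mul_le_mul_of_nonneg_left (norm_le_l2norm (w - wbar)) hε.le
  simp only [ContinuousLinearMap.comp_apply, LinearMap.coe_toContinuousLinearMap',
    mulVecLin_apply, dotProductBilin_apply_apply, dotProduct_mulVec, ← mulVec_transpose] at hsub
  linarith

/-- Under strict feasibility, `Jᵀμ*` is a regular (Fréchet)
subgradient of the composite value function `w ↦ V(B(w))` at `w̄`, for any
optimal dual solution `μ*`; the regular-subgradient inequality is stated in
its `ε`–`δ` (liminf ≥ 0) form. -/
theorem lcqp_value_regular_subgradient_neural_weights
    (N M p : ℕ) (hN : 0 < N) (hM : 0 < M) (hp : 0 < p)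
    (Q : Matrix (Fin N) (Fin N) ℝ) (hQsymm : Q.IsSymm) (hQpd : Q.PosDef)
    (c : Fin N → ℝ) (A : Matrix (Fin M) (Fin N) ℝ)
    (Ω : (Fin M → ℝ) → Set (Fin N → ℝ))
    (hΩ : ∀ b, Ω b = {ν | ∀ i, A.mulVec ν i + b i ≤ 0})
    (V : (Fin M → ℝ) → ℝ)
    (hV : ∀ b, (Ω b).Nonempty →
      IsLeast ((fun ν => ν ⬝ᵥ Q.mulVec ν + c ⬝ᵥ ν) '' Ω b) (V b))
    (h : (Fin M → ℝ) → (Fin M → ℝ) → ℝ)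
    (hh : ∀ μ b, h μ b = (1 / 4) * (μ ⬝ᵥ (A * Q⁻¹ * Aᵀ).mulVec μ) +
      (1 / 2) * (((A * Q⁻¹).mulVec c - (2 : ℝ) • b) ⬝ᵥ μ))
    (wbar : Fin p → ℝ) (B : (Fin p → ℝ) → (Fin M → ℝ))
    (J : Matrix (Fin M) (Fin p) ℝ)
    (hB : HasFDerivAt B (LinearMap.toContinuousLinearMap J.mulVecLin) wbar)
    (νbar : Fin N → ℝ)
    (hstrict : ∀ i, A.mulVec νbar i + B wbar i < 0)
    (μstar : Fin M → ℝ) (hμnonneg : 0 ≤ μstar)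
    (hμmin : ∀ μ : Fin M → ℝ, 0 ≤ μ → h μstar (B wbar) ≤ h μ (B wbar)) :
    ∀ ε : ℝ, 0 < ε → ∃ δ : ℝ, 0 < δ ∧
      ∀ w : Fin p → ℝ, w ≠ wbar → l2norm (w - wbar) < δ →
        (Ω (B w)).Nonempty ∧
        -(ε * l2norm (w - wbar)) ≤
          V (B w) - V (B wbar) - Jᵀ.mulVec μstar ⬝ᵥ (w - wbar) :=
  lcqp_value_regular_subgradient_neural_weights_general N M p Q hQpd c A Ω hΩ V hV h hh wbar B J hB
    νbar hstrict μstar hμnonneg hμmin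
end
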